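/- arXiv:1801.00131 — 2 statements merged into one kernel-verified Lean document; each statement's English description precedes it below -/
import Mathlib

section
/- Let G be an additive abelian group and T a zero-sum free subset of G with |T| = 4 containing no element of order 2. Then there exists a 3-element subset T' of T with |Σ(T')| = 7, provided |Σ(T)| ≤ 8. -/
open Finset

def sigmaSet {G : Type*} [AddCommGroup G] [DecidableEq G] (S : Finset G) : Finset G :=
  (S.powerset.filter (· ≠ ∅)).image (fun T => T.sum id)

lemma mem_sigmaSet {G : Type*} [AddCommGroup G] [DecidableEq G] {S : Finset G} {g : G} :
    g ∈ sigmaSet S ↔ ∃ U, U ⊆ S ∧ U ≠ ∅ ∧ U.sum id = g := by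
  simp only [sigmaSet, mem_image, mem_filter, mem_powerset]
  constructor
  · rintro ⟨U, ⟨h1, h2⟩, h3⟩; exact ⟨U, h1, h2, h3⟩
  · rintro ⟨U, h1, h2, h3⟩; exact ⟨U, ⟨h1, h2⟩, h3⟩

lemma sigmaSet_empty {G : Type*} [AddCommGroup G] [DecidableEq G] :
    sigmaSet (∅ : Finset G) = ∅ := by
  ext g; simp [mem_sigmaSet, Finset.subset_empty]

lemma sigmaSet_insert {G : Type*} [AddCommGroup G] [DecidableEq G] {S : Finset G} {a : G}
    (ha : a ∉ S) :
    sigmaSet (insert a S) = insert a (sigmaSet S ∪ (sigmaSet S).image (a + ·)) := by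
  ext g
  simp only [mem_insert, mem_union, mem_image, mem_sigmaSet]
  constructor
  · rintro ⟨U, hUS, hUne, hsum⟩
    by_cases haU : a ∈ U
    · rcases eq_or_ne (U.erase a) ∅ with he | he
      · left
        have : U = {a} := by
          apply Finset.eq_singleton_iff_unique_mem.mpr
          refine ⟨haU, fun x hx => ?_⟩
          by_contra hne
          exact (Finset.notMem_empty x) (he ▸ Finset.mem_erase.mpr ⟨hne, hx⟩)
        rw [this] at hsum; simpa using hsum.symm
      · right; right
        refine ⟨(U.erase a).sum id, ⟨U.erase a, ?_, he, rfl⟩, ?_⟩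
        · exact Finset.subset_insert_iff.mp hUS
        · rw [← hsum, ← Finset.add_sum_erase U id haU]; simp
    · right; left
      exact ⟨U, (Finset.subset_insert_iff_of_notMem haU).mp hUS, hUne, hsum⟩
  · rintro (rfl | ⟨U, h1, h2, h3⟩ | ⟨w, ⟨U, h1, h2, h3⟩, hw⟩)
    · exact ⟨{g}, by simp, by simp, by simp⟩
    · exact ⟨U, h1.trans (Finset.subset_insert a S), h2, h3⟩
    · have haU : a ∉ U := fun h => ha (h1 h)
      refine ⟨insert a U, Finset.insert_subset_insert a h1, by simp, ?_⟩
      rw [Finset.sum_insert haU, h3]; simpa using hw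

lemma sigmaSet_triple {G : Type*} [AddCommGroup G] [DecidableEq G] {x y z : G}
    (hxy : x ≠ y) (hxz : x ≠ z) (hyz : y ≠ z) :
    sigmaSet {x, y, z} = {x, y, z, y + z, x + y, x + z, x + (y + z)} := by
  have h1 : sigmaSet {z} = {z} := by
    rw [show ({z} : Finset G) = insert z ∅ from rfl, sigmaSet_insert (by simp), sigmaSet_empty]
    simp
  have h2 : sigmaSet {y, z} = {y, z, y + z} := by
    rw [show ({y, z} : Finset G) = insert y {z} from rfl,
      sigmaSet_insert (by simp [hyz]), h1]
    ext g; simp [or_assoc]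
  rw [show ({x, y, z} : Finset G) = insert x {y, z} from rfl,
    sigmaSet_insert (by simp [hxy, hxz]), h2]
  ext g
  simp only [mem_insert, mem_union, mem_image, mem_singleton]
  constructor
  · rintro (rfl | (rfl | rfl | rfl) | ⟨w, (rfl | rfl | rfl), rfl⟩) <;> tauto
  · rintro (rfl | rfl | rfl | rfl | rfl | rfl | rfl)
    · exact Or.inl rfl
    · exact Or.inr (Or.inl (Or.inl rfl))
    · exact Or.inr (Or.inl (Or.inr (Or.inl rfl)))
    · exact Or.inr (Or.inl (Or.inr (Or.inr rfl)))
    · exact Or.inr (Or.inr ⟨y, Or.inl rfl, rfl⟩)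
    · exact Or.inr (Or.inr ⟨z, Or.inr (Or.inl rfl), rfl⟩)
    · exact Or.inr (Or.inr ⟨y + z, Or.inr (Or.inr rfl), rfl⟩)

lemma card_seven {G : Type*} [AddCommGroup G] [DecidableEq G] {x y z : G}
    (hxy : x ≠ y) (hxz : x ≠ z) (hyz : y ≠ z)
    (hx0 : x ≠ 0) (hy0 : y ≠ 0) (hz0 : z ≠ 0)
    (hxy0 : x + y ≠ 0) (hxz0 : x + z ≠ 0) (hyz0 : y + z ≠ 0)
    (r1 : x ≠ y + z) (r2 : y ≠ x + z) (r3 : z ≠ x + y) :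
    (sigmaSet {x, y, z}).card = 7 := by
  rw [sigmaSet_triple hxy hxz hyz]
  have n1 : x ∉ ({y, z, y + z, x + y, x + z, x + (y + z)} : Finset G) := by
    simp only [mem_insert, mem_singleton, not_or]
    refine ⟨hxy, hxz, r1, ?_, ?_, ?_⟩
    · intro h; exact hy0 (by linear_combination (norm := abel) -h)
    · intro h; exact hz0 (by linear_combination (norm := abel) -h)
    · intro h; exact hyz0 (by linear_combination (norm := abel) -h)
  have n2 : y ∉ ({z, y + z, x + y, x + z, x + (y + z)} : Finset G) := by
    simp only [mem_insert, mem_singleton, not_or]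
    refine ⟨hyz, ?_, ?_, r2, ?_⟩
    · intro h; exact hz0 (by linear_combination (norm := abel) -h)
    · intro h; exact hx0 (by linear_combination (norm := abel) -h)
    · intro h; exact hxz0 (by linear_combination (norm := abel) -h)
  have n3 : z ∉ ({y + z, x + y, x + z, x + (y + z)} : Finset G) := by
    simp only [mem_insert, mem_singleton, not_or]
    refine ⟨?_, r3, ?_, ?_⟩
    · intro h; exact hy0 (by linear_combination (norm := abel) -h)
    · intro h; exact hx0 (by linear_combination (norm := abel) -h)
    · intro h; exact hxy0 (by linear_combination (norm := abel) -h)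
  have n4 : y + z ∉ ({x + y, x + z, x + (y + z)} : Finset G) := by
    simp only [mem_insert, mem_singleton, not_or]
    refine ⟨?_, ?_, ?_⟩
    · intro h; exact hxz (by linear_combination (norm := abel) -h)
    · intro h; exact hxy (by linear_combination (norm := abel) -h)
    · intro h; exact hx0 (by linear_combination (norm := abel) -h)
  have n5 : x + y ∉ ({x + z, x + (y + z)} : Finset G) := by
    simp only [mem_insert, mem_singleton, not_or]
    refine ⟨?_, ?_⟩
    · intro h; exact hyz (by linear_combination (norm := abel) h)
    · intro h; exact hz0 (by linear_combination (norm := abel) -h)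
  have n6 : x + z ∉ ({x + (y + z)} : Finset G) := by
    simp only [mem_singleton]
    intro h; exact hy0 (by linear_combination (norm := abel) -h)
  rw [card_insert_of_notMem n1, card_insert_of_notMem n2, card_insert_of_notMem n3,
    card_insert_of_notMem n4, card_insert_of_notMem n5, card_insert_of_notMem n6,
    card_singleton]

def ZeroSumFree {G : Type*} [AddCommGroup G] (S : Finset G) : Prop :=
  ∀ T ⊆ S, T ≠ ∅ → T.sum id ≠ 0

lemma pick {G : Type*} [AddCommGroup G] [DecidableEq G] {T : Finset G} (hT : ZeroSumFree T)
    {x y z : G} (hx : x ∈ T) (hy : y ∈ T) (hz : z ∈ T)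
    (hxy : x ≠ y) (hxz : x ≠ z) (hyz : y ≠ z)
    (r1 : x ≠ y + z) (r2 : y ≠ x + z) (r3 : z ≠ x + y) :
    ∃ T' ⊆ T, T'.card = 3 ∧ (sigmaSet T').card = 7 := by
  have single : ∀ u ∈ T, u ≠ (0 : G) := fun u hu h0 =>
    hT {u} (singleton_subset_iff.mpr hu) (by simp) (by simpa using h0)
  have pairNZ : ∀ u ∈ T, ∀ v ∈ T, u ≠ v → u + v ≠ 0 := fun u hu v hv huv h0 =>
    hT {u, v} (insert_subset hu (singleton_subset_iff.mpr hv)) (by simp)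
      (by rw [Finset.sum_pair huv]; exact h0)
  refine ⟨{x, y, z}, insert_subset hx (insert_subset hy (singleton_subset_iff.mpr hz)), ?_, ?_⟩
  · rw [card_insert_of_notMem (by simp [hxy, hxz]),
      card_insert_of_notMem (by simp [hyz]), card_singleton]
  · exact card_seven hxy hxz hyz (single x hx) (single y hy) (single z hz)
      (pairNZ x hx y hy hxy) (pairNZ x hx z hz hxz) (pairNZ y hy z hz hyz) r1 r2 r3

theorem stmt10 {G : Type*} [AddCommGroup G] [DecidableEq G] (T : Finset G)
    (hT : ZeroSumFree T) (hcard : T.card = 4)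
    (h2 : ∀ g ∈ T, ¬(g ≠ 0 ∧ g + g = 0))
    (hle : (sigmaSet T).card ≤ 8) :
    ∃ T' ⊆ T, T'.card = 3 ∧ (sigmaSet T').card = 7 := by
  clear hle
  have hcard' : T.card = 3 + 1 := hcard
  obtain ⟨a, s, has, hTs, hs3⟩ := Finset.card_eq_succ.mp hcard'
  obtain ⟨b, c, d, hbc, hbd, hcd, rfl⟩ := Finset.card_eq_three.mp hs3
  subst hTs
  have ha : a ∈ insert a ({b, c, d} : Finset G) := mem_insert_self _ _
  have hb : b ∈ insert a ({b, c, d} : Finset G) := by simp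
  have hc : c ∈ insert a ({b, c, d} : Finset G) := by simp
  have hd : d ∈ insert a ({b, c, d} : Finset G) := by simp
  have hab : a ≠ b := fun h => has (by simp [h])
  have hac : a ≠ c := fun h => has (by simp [h])
  have had : a ≠ d := fun h => has (by simp [h])
  have single : ∀ u ∈ insert a ({b, c, d} : Finset G), u ≠ (0 : G) := fun u hu h0 =>
    hT {u} (singleton_subset_iff.mpr hu) (by simp) (by simpa using h0)
  have pairNZ : ∀ u ∈ insert a ({b, c, d} : Finset G),
      ∀ v ∈ insert a ({b, c, d} : Finset G), u ≠ v → u + v ≠ 0 := fun u hu v hv huv h0 =>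
    hT {u, v} (insert_subset hu (singleton_subset_iff.mpr hv)) (by simp)
      (by rw [Finset.sum_pair huv]; exact h0)
  -- case analysis on triple {a,b,c}
  by_cases h1 : a = b + c
  · -- A1
    by_cases k1 : a = b + d
    · exact absurd (show c = d by linear_combination (norm := abel) k1 - h1) hcd
    by_cases k2 : b = a + d
    · exact absurd (show c + d = 0 by linear_combination (norm := abel) -h1 - k2)
        (pairNZ c hc d hd hcd)
    by_cases k3 : d = a + b
    · -- P3 = {a, c, d}
      by_cases m1 : a = c + d
      · exact absurd (show b + c = 0 by linear_combination (norm := abel) -m1 - k3)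
          (pairNZ b hb c hc hbc)
      by_cases m2 : c = a + d
      · exact absurd (show b + d = 0 by linear_combination (norm := abel) -h1 - m2)
          (pairNZ b hb d hd hbd)
      by_cases m3 : d = a + c
      · exact absurd (show b = c by linear_combination (norm := abel) m3 - k3) hbc
      exact pick hT ha hc hd hac had hcd m1 m2 m3
    exact pick hT ha hb hd hab had hbd k1 k2 k3
  by_cases h2' : b = a + c
  · -- B1
    by_cases k1 : a = b + d
    · exact absurd (show c + d = 0 by linear_combination (norm := abel) -h2' - k1)
        (pairNZ c hc d hd hcd)
    by_cases k2 : b = a + d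
    · exact absurd (show c = d by linear_combination (norm := abel) k2 - h2') hcd
    by_cases k3 : d = a + b
    · -- P3 = {b, c, d}
      by_cases m1 : b = c + d
      · exact absurd (show a + c = 0 by linear_combination (norm := abel) -m1 - k3)
          (pairNZ a ha c hc hac)
      by_cases m2 : c = b + d
      · exact absurd (show a + d = 0 by linear_combination (norm := abel) -h2' - m2)
          (pairNZ a ha d hd had)
      by_cases m3 : d = b + c
      · exact absurd (show a = c by linear_combination (norm := abel) m3 - k3) hac
      exact pick hT hb hc hd hbc hbd hcd m1 m2 m3
    exact pick hT ha hb hd hab had hbd k1 k2 k3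
  by_cases h3 : c = a + b
  · -- C1
    by_cases k1 : a = b + d
    · -- P3 = {a, c, d}
      by_cases m1 : a = c + d
      · exact absurd (show b + d = 0 by linear_combination (norm := abel) -m1 - h3)
          (pairNZ b hb d hd hbd)
      by_cases m2 : c = a + d
      · exact absurd (show b = d by linear_combination (norm := abel) m2 - h3) hbd
      by_cases m3 : d = a + c
      · exact absurd (show b + c = 0 by linear_combination (norm := abel) -k1 - m3)
          (pairNZ b hb c hc hbc)
      exact pick hT ha hc hd hac had hcd m1 m2 m3
    by_cases k2 : b = a + d
    · -- P3 = {b, c, d}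
      by_cases m1 : b = c + d
      · exact absurd (show a + d = 0 by linear_combination (norm := abel) -m1 - h3)
          (pairNZ a ha d hd had)
      by_cases m2 : c = b + d
      · exact absurd (show a = d by linear_combination (norm := abel) m2 - h3) had
      by_cases m3 : d = b + c
      · exact absurd (show a + c = 0 by linear_combination (norm := abel) -k2 - m3)
          (pairNZ a ha c hc hac)
      exact pick hT hb hc hd hbc hbd hcd m1 m2 m3
    by_cases k3 : d = a + b
    · exact absurd (show c = d by linear_combination (norm := abel) h3 - k3) hcd
    exact pick hT ha hb hd hab had hbd k1 k2 k3
  exact pick hT ha hb hc hab hac hbc h1 h2' h3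
end

section
/- Let G be an additive abelian group containing an element x of order 14, and let S = {−2x, x, 3x, 4x, 5x}. Then S is a zero-sum free subset of G with |S| = 5 and |Σ(S)| = 13. -/
open Finset

lemma sigmaSet_image {G H : Type*} [AddCommGroup G] [AddCommGroup H]
    [DecidableEq G] [DecidableEq H] (φ : G →+ H) (hφ : Function.Injective φ)
    (S : Finset G) : sigmaSet (S.image φ) = (sigmaSet S).image φ := by
  classical
  ext y
  simp only [sigmaSet, mem_image, mem_filter, mem_powerset]
  constructor
  · rintro ⟨U, ⟨hUS, hUne⟩, rfl⟩
    refine ⟨(S.filter (fun a => φ a ∈ U)).sum id, ⟨S.filter (fun a => φ a ∈ U),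
      ⟨filter_subset _ _, ?_⟩, rfl⟩, ?_⟩
    · obtain ⟨u, hu⟩ := nonempty_of_ne_empty hUne
      obtain ⟨a, haS, rfl⟩ := mem_image.1 (hUS hu)
      exact ne_empty_of_mem (mem_filter.2 ⟨haS, hu⟩)
    · have hUeq : U = (S.filter (fun a => φ a ∈ U)).image φ := by
        ext v
        simp only [mem_image, mem_filter]
        constructor
        · intro hv
          obtain ⟨a, haS, rfl⟩ := mem_image.1 (hUS hv)
          exact ⟨a, ⟨haS, hv⟩, rfl⟩
        · rintro ⟨a, ⟨_, hv⟩, rfl⟩; exact hv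
      conv_rhs => rw [hUeq]
      rw [sum_image (fun a _ b _ h => hφ h), map_sum]
      rfl
  · rintro ⟨_, ⟨T, ⟨hTS, hTne⟩, rfl⟩, rfl⟩
    refine ⟨T.image φ, ⟨image_subset_image hTS, ?_⟩, ?_⟩
    · simpa [image_eq_empty] using hTne
    · rw [sum_image (fun a _ b _ h => hφ h), map_sum]
      rfl

lemma zsf_iff {G : Type*} [AddCommGroup G] [DecidableEq G] (S : Finset G) :
    ZeroSumFree S ↔ (0 : G) ∉ sigmaSet S := by
  simp only [ZeroSumFree, sigmaSet, mem_image, mem_filter, mem_powerset, not_exists]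
  constructor
  · rintro h y ⟨⟨h1, h2⟩, h3⟩; exact h y h1 h2 h3
  · intro h T h1 h2 h3; exact h T ⟨⟨h1, h2⟩, h3⟩

theorem stmt19 {G : Type*} [AddCommGroup G] [DecidableEq G] (x : G)
    (hx : addOrderOf x = 14) :
    ZeroSumFree ({-(2 • x), x, 3 • x, 4 • x, 5 • x} : Finset G) ∧
      ({-(2 • x), x, 3 • x, 4 • x, 5 • x} : Finset G).card = 5 ∧
      (sigmaSet ({-(2 • x), x, 3 • x, 4 • x, 5 • x} : Finset G)).card = 13 := by
  classical
  have h14n : (14 : ℕ) • x = 0 := by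
    have := addOrderOf_nsmul_eq_zero x
    rwa [hx] at this
  have h14 : (14 : ℤ) • x = 0 := by
    rw [show ((14:ℤ)) = ((14:ℕ):ℤ) by norm_num, natCast_zsmul]
    exact h14n
  set φ : ZMod 14 →+ G := ZMod.lift 14 ⟨zmultiplesHom G x, by simpa using h14⟩ with hφdef
  have hφcoe : ∀ m : ℤ, φ (m : ZMod 14) = m • x := fun m => ZMod.lift_coe 14 _ m
  have hφinj : Function.Injective φ := by
    rw [injective_iff_map_eq_zero]
    intro k hk
    have : φ ((k.val : ℤ) : ZMod 14) = 0 := by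
      rwa [show ((k.val : ℤ) : ZMod 14) = k by simp [ZMod.intCast_cast]]
    rw [hφcoe] at this
    have hdvd : ((addOrderOf x : ℤ)) ∣ (k.val : ℤ) :=
      addOrderOf_dvd_iff_zsmul_eq_zero.2 this
    rw [hx] at hdvd
    have hd : (14 : ℕ) ∣ k.val := by exact_mod_cast hdvd
    have hlt : k.val < 14 := k.val_lt
    have h0 : k.val = 0 := by omega
    exact (ZMod.val_eq_zero k).1 h0
  have key : ∀ m : ℕ, φ ((m : ℤ) : ZMod 14) = m • x := by
    intro m
    rw [hφcoe, natCast_zsmul]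
  have e1 : φ (1 : ZMod 14) = x := by
    have := key 1; simpa using this
  have e3 : φ (3 : ZMod 14) = 3 • x := by
    have := key 3; norm_num at this ⊢; exact this
  have e4 : φ (4 : ZMod 14) = 4 • x := by
    have := key 4; norm_num at this ⊢; exact this
  have e5 : φ (5 : ZMod 14) = 5 • x := by
    have := key 5; norm_num at this ⊢; exact this
  have e12 : φ (12 : ZMod 14) = -(2 • x) := by
    have h12 : φ (12 : ZMod 14) = (12 : ℕ) • x := by
      have := key 12; norm_num at this ⊢; exact this
    rw [h12, eq_neg_iff_add_eq_zero, ← add_nsmul]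
    norm_num
    exact h14n
  have hSeq : ({-(2 • x), x, 3 • x, 4 • x, 5 • x} : Finset G)
      = ({12, 1, 3, 4, 5} : Finset (ZMod 14)).image φ := by
    rw [show ({12, 1, 3, 4, 5} : Finset (ZMod 14)).image φ
        = {φ 12, φ 1, φ 3, φ 4, φ 5} by simp [Finset.image_insert]]
    rw [e1, e3, e4, e5, e12]
  have hcard0 : ({12, 1, 3, 4, 5} : Finset (ZMod 14)).card = 5 := by decide
  have hsig0 : (sigmaSet ({12, 1, 3, 4, 5} : Finset (ZMod 14))).card = 13 := by decide
  have h0sig : (0 : ZMod 14) ∉ sigmaSet ({12, 1, 3, 4, 5} : Finset (ZMod 14)) := by decide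
  refine ⟨?_, ?_, ?_⟩
  · rw [zsf_iff, hSeq, sigmaSet_image φ hφinj]
    intro hmem
    obtain ⟨a, ha, h0⟩ := mem_image.1 hmem
    have : a = 0 := hφinj (by simpa using h0)
    subst this
    exact h0sig ha
  · rw [hSeq, card_image_of_injective _ hφinj, hcard0]
  · rw [hSeq, sigmaSet_image φ hφinj, card_image_of_injective _ hφinj, hsig0]
end
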